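/- (Reduction of the link-weight optimization, Theorem RAmain part 3.) Let L be the Laplacian of a connected simple undirected graph on N vertices, fix 0 < ε, δ < 1, K > 0, φ_max > 0, and for 0 < α < 2/λ_N(L) define T̂^α(ε,δ) = α² g(γ₂(α)) + h(γ₂(α)), where γ₂(α) = ρ(I − αL − (1/N)J), h(γ₂) = ln(ε/2)/ln γ₂ + 1, and g(γ₂) = (4φ_max² ln(2/δ)/(Kε)) · h(γ₂) · [ ln(ε/2)/(N ln γ₂) + 1/N + ((1 − γ₂²ε²/4)/(1 − γ₂²))(1 − 1/N) ]. Then inf_{0<α<2/λ_N(L)} T̂^α(ε,δ) = inf_{0<α≤2/(λ₂(L)+λ_N(L))} T̂^α(ε,δ), and on the latter range γ₂(α) = 1 − αλ₂(L); that is, no α greater than α• = 2/(λ₂(L)+λ_N(L)) improves the approximate averaging time. -/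

import Mathlib

/-!
On `𝟏^⊥` the matrix `I - αL - J/N` acts as `I - αL` and it kills `𝟏`, so by the Rayleigh-quotient
characterisations `γ₂(α) = max (1 - αλ₂) (αλ_N - 1)`; the first term is the larger one exactly
when `α ≤ α• = 2/(λ₂+λ_N)`. For `α• < α < 2/λ_N` the smaller weight `α' = (2 - αλ_N)/λ₂ ≤ α•`
has `1 - α'λ₂ = αλ_N - 1`, i.e. the same `γ₂`, and since `g ≥ 0` on `(0,1)` we get
`T̂^{α'} ≤ T̂^α`. Hence every value of `T̂` on the large range is dominated by one on the small
range, and the two infima agree.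
-/

open Matrix

/-- `L` is the Laplacian matrix `L = D − A` of a simple undirected graph on `N` vertices. -/
def IsGraphLaplacian {N : ℕ} (L : Matrix (Fin N) (Fin N) ℝ) : Prop :=
  L.IsSymm ∧ (∀ i j, i ≠ j → L i j = 0 ∨ L i j = -1) ∧ (∀ i, ∑ j, L i j = 0)

/-- Second-smallest eigenvalue (algebraic connectivity) via Courant–Fischer. -/
noncomputable def lambda2 {N : ℕ} (L : Matrix (Fin N) (Fin N) ℝ) : ℝ :=
  sInf {r | ∃ x : Fin N → ℝ, (∑ i, (x i) ^ 2) = 1 ∧ (∑ i, x i) = 0 ∧ r = x ⬝ᵥ L.mulVec x}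

/-- Largest eigenvalue via the Rayleigh quotient. -/
noncomputable def lambdaN {N : ℕ} (L : Matrix (Fin N) (Fin N) ℝ) : ℝ :=
  sSup {r | ∃ x : Fin N → ℝ, (∑ i, (x i) ^ 2) = 1 ∧ r = x ⬝ᵥ L.mulVec x}

/-- Spectral radius of a symmetric real matrix, via the Rayleigh quotient
(for symmetric matrices this equals the induced 2-norm). -/
noncomputable def specNorm {N : ℕ} (M : Matrix (Fin N) (Fin N) ℝ) : ℝ :=
  sSup {r | ∃ x : Fin N → ℝ, (∑ i, (x i) ^ 2) = 1 ∧ r = |x ⬝ᵥ M.mulVec x|}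

open Finset

section Rayleigh

variable {N : ℕ}

theorem abs_dotProduct_mulVec_le_of_sum_sq_eq_one (M : Matrix (Fin N) (Fin N) ℝ)
    {x : Fin N → ℝ} (hx : ∑ i, x i ^ 2 = 1) :
    |x ⬝ᵥ M *ᵥ x| ≤ ∑ i, ∑ j, |M i j| := by
  have hx1 : ∀ i, |x i| ≤ 1 := fun i => (sq_le_one_iff_abs_le_one _).1 <|
    hx ▸ single_le_sum (f := fun i => x i ^ 2) (fun i _ => sq_nonneg _) (mem_univ i)
  have hexp : x ⬝ᵥ M *ᵥ x = ∑ i, ∑ j, x i * (M i j * x j) := by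
    simp only [dotProduct, mulVec, mul_sum]
  rw [hexp]
  refine (abs_sum_le_sum_abs _ _).trans <| sum_le_sum fun i _ =>
    (abs_sum_le_sum_abs _ _).trans <| sum_le_sum fun j _ => ?_
  rw [abs_mul, abs_mul]
  calc |x i| * (|M i j| * |x j|) ≤ 1 * (|M i j| * 1) := by gcongr <;> exact hx1 _
    _ = |M i j| := by ring

theorem smul_dotProduct_mulVec_smul (M : Matrix (Fin N) (Fin N) ℝ) (c : ℝ) (x : Fin N → ℝ) :
    (c • x) ⬝ᵥ M *ᵥ (c • x) = c ^ 2 * (x ⬝ᵥ M *ᵥ x) := by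
  rw [mulVec_smul, dotProduct_smul, smul_dotProduct, smul_eq_mul, smul_eq_mul]
  ring

theorem sum_sq_inv_sqrt_smul {x : Fin N → ℝ} (hx : 0 < ∑ i, x i ^ 2) :
    ∑ i, ((√(∑ j, x j ^ 2))⁻¹ • x) i ^ 2 = 1 := by
  simp only [Pi.smul_apply, smul_eq_mul, mul_pow, ← mul_sum, inv_pow,
    Real.sq_sqrt hx.le, inv_mul_cancel₀ hx.ne']

theorem exists_sum_sq_eq_one_sum_eq_zero (hN : 1 < N) :
    ∃ x : Fin N → ℝ, ∑ i, x i ^ 2 = 1 ∧ ∑ i, x i = 0 := by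
  obtain ⟨i, j, hij⟩ : ∃ i j : Fin N, i ≠ j := ⟨⟨0, by omega⟩, ⟨1, hN⟩, by simp [Fin.ext_iff]⟩
  refine ⟨(√2)⁻¹ • (Pi.single i 1 - Pi.single j 1), ?_, ?_⟩
  · norm_num [mul_pow, ← mul_sum, sub_sq, sum_add_distrib, sum_sub_distrib, Pi.single_apply,
      hij.symm]
  · simp [← mul_sum, sum_sub_distrib]

theorem one_lt_of_lambda2_ne_zero {L : Matrix (Fin N) (Fin N) ℝ} (h : lambda2 L ≠ 0) :
    1 < N := by
  -- for `N ≤ 1` no unit vector has zero sum, and `sInf ∅ = 0`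
  by_contra! hN
  have hempty : {r | ∃ x : Fin N → ℝ, ∑ i, x i ^ 2 = 1 ∧ ∑ i, x i = 0 ∧
      r = x ⬝ᵥ L *ᵥ x} = ∅ := by
    refine Set.eq_empty_of_forall_notMem ?_
    rintro r ⟨x, hx1, hx0, -⟩
    interval_cases N <;> simp_all
  exact h (by rw [lambda2, hempty, Real.sInf_empty])

theorem lambda2_le {L : Matrix (Fin N) (Fin N) ℝ} {x : Fin N → ℝ}
    (hx1 : ∑ i, x i ^ 2 = 1) (hx0 : ∑ i, x i = 0) : lambda2 L ≤ x ⬝ᵥ L *ᵥ x := by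
  refine csInf_le ⟨-∑ i, ∑ j, |L i j|, ?_⟩ ⟨x, hx1, hx0, rfl⟩
  rintro _ ⟨y, hy1, -, rfl⟩
  exact neg_le_of_abs_le (abs_dotProduct_mulVec_le_of_sum_sq_eq_one L hy1)

theorem le_lambda2 {L : Matrix (Fin N) (Fin N) ℝ} (hN : 1 < N) {c : ℝ}
    (h : ∀ x : Fin N → ℝ, ∑ i, x i ^ 2 = 1 → ∑ i, x i = 0 → c ≤ x ⬝ᵥ L *ᵥ x) :
    c ≤ lambda2 L := by
  obtain ⟨x, hx1, hx0⟩ := exists_sum_sq_eq_one_sum_eq_zero hN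
  refine le_csInf ⟨_, x, hx1, hx0, rfl⟩ ?_
  rintro _ ⟨y, hy1, hy0, rfl⟩
  exact h y hy1 hy0

theorem le_lambdaN {L : Matrix (Fin N) (Fin N) ℝ} {x : Fin N → ℝ}
    (hx1 : ∑ i, x i ^ 2 = 1) : x ⬝ᵥ L *ᵥ x ≤ lambdaN L := by
  refine le_csSup ⟨∑ i, ∑ j, |L i j|, ?_⟩ ⟨x, hx1, rfl⟩
  rintro _ ⟨y, hy1, rfl⟩
  exact le_of_abs_le (abs_dotProduct_mulVec_le_of_sum_sq_eq_one L hy1)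

theorem lambdaN_le {L : Matrix (Fin N) (Fin N) ℝ} (hN : 1 < N) {c : ℝ}
    (h : ∀ x : Fin N → ℝ, ∑ i, x i ^ 2 = 1 → x ⬝ᵥ L *ᵥ x ≤ c) : lambdaN L ≤ c := by
  obtain ⟨x, hx1, -⟩ := exists_sum_sq_eq_one_sum_eq_zero hN
  refine csSup_le ⟨_, x, hx1, rfl⟩ ?_
  rintro _ ⟨y, hy1, rfl⟩
  exact h y hy1

theorem abs_le_specNorm {M : Matrix (Fin N) (Fin N) ℝ} {x : Fin N → ℝ}
    (hx1 : ∑ i, x i ^ 2 = 1) : |x ⬝ᵥ M *ᵥ x| ≤ specNorm M := by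
  refine le_csSup ⟨∑ i, ∑ j, |M i j|, ?_⟩ ⟨x, hx1, rfl⟩
  rintro _ ⟨y, hy1, rfl⟩
  exact abs_dotProduct_mulVec_le_of_sum_sq_eq_one M hy1

theorem specNorm_le {M : Matrix (Fin N) (Fin N) ℝ} (hN : 1 < N) {c : ℝ}
    (h : ∀ x : Fin N → ℝ, ∑ i, x i ^ 2 = 1 → |x ⬝ᵥ M *ᵥ x| ≤ c) : specNorm M ≤ c := by
  obtain ⟨x, hx1, -⟩ := exists_sum_sq_eq_one_sum_eq_zero hN
  refine csSup_le ⟨_, x, hx1, rfl⟩ ?_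
  rintro _ ⟨y, hy1, rfl⟩
  exact h y hy1

theorem lambda2_le_lambdaN {L : Matrix (Fin N) (Fin N) ℝ} (hN : 1 < N) :
    lambda2 L ≤ lambdaN L := by
  obtain ⟨x, hx1, hx0⟩ := exists_sum_sq_eq_one_sum_eq_zero hN
  exact (lambda2_le hx1 hx0).trans (le_lambdaN hx1)

theorem eq_zero_of_sum_sq_eq_zero {x : Fin N → ℝ} (hx : ∑ i, x i ^ 2 = 0) : x = 0 := by
  funext i
  exact pow_eq_zero_iff two_ne_zero |>.1 <|
    (sum_eq_zero_iff_of_nonneg fun i _ => sq_nonneg (x i)).1 hx i (mem_univ i)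

theorem lambda2_mul_sum_sq_le (L : Matrix (Fin N) (Fin N) ℝ) {y : Fin N → ℝ}
    (hy0 : ∑ i, y i = 0) : lambda2 L * ∑ i, y i ^ 2 ≤ y ⬝ᵥ L *ᵥ y := by
  rcases (sum_nonneg fun i _ => sq_nonneg (y i)).eq_or_lt with ht | ht
  · simp [eq_zero_of_sum_sq_eq_zero ht.symm]
  · have hu0 : ∑ i, ((√(∑ j, y j ^ 2))⁻¹ • y) i = 0 := by
      simp only [Pi.smul_apply, smul_eq_mul, ← mul_sum, hy0, mul_zero]
    have h := lambda2_le (L := L) (sum_sq_inv_sqrt_smul ht) hu0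
    rwa [smul_dotProduct_mulVec_smul, inv_pow, Real.sq_sqrt ht.le, inv_mul_eq_div,
      le_div_iff₀ ht] at h

theorem dotProduct_mulVec_le_lambdaN_mul (L : Matrix (Fin N) (Fin N) ℝ) (y : Fin N → ℝ) :
    y ⬝ᵥ L *ᵥ y ≤ lambdaN L * ∑ i, y i ^ 2 := by
  rcases (sum_nonneg fun i _ => sq_nonneg (y i)).eq_or_lt with ht | ht
  · simp [eq_zero_of_sum_sq_eq_zero ht.symm]
  · have h := le_lambdaN (L := L) (sum_sq_inv_sqrt_smul ht)
    rwa [smul_dotProduct_mulVec_smul, inv_pow, Real.sq_sqrt ht.le, inv_mul_eq_div,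
      div_le_iff₀ ht] at h

end Rayleigh

section Deflated

variable {N : ℕ} {L : Matrix (Fin N) (Fin N) ℝ}

theorem sub_const_dotProduct_mulVec_sub_const (hsym : L.IsSymm) (hrow : ∀ i, ∑ j, L i j = 0)
    (x : Fin N → ℝ) (c : ℝ) :
    (x - fun _ => c) ⬝ᵥ L *ᵥ (x - fun _ => c) = x ⬝ᵥ L *ᵥ x := by
  have hL : L *ᵥ (fun _ => c) = 0 := by
    funext i
    simp [mulVec, dotProduct, ← sum_mul, hrow i]
  have hLt : (fun _ => c) ᵥ* L = 0 := by
    rw [← hsym.eq, vecMul_transpose, hL]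
  rw [mulVec_sub, hL, sub_zero, sub_dotProduct, dotProduct_mulVec (fun _ => c), hLt,
    zero_dotProduct, sub_zero]

theorem dotProduct_deflated_mulVec (L : Matrix (Fin N) (Fin N) ℝ) (α : ℝ) (x : Fin N → ℝ) :
    x ⬝ᵥ ((1 : Matrix (Fin N) (Fin N) ℝ) - α • L
        - (N : ℝ)⁻¹ • Matrix.of (fun _ _ => (1 : ℝ))) *ᵥ x
      = ∑ i, x i ^ 2 - α * (x ⬝ᵥ L *ᵥ x) - (N : ℝ)⁻¹ * (∑ i, x i) ^ 2 := by
  have hJ : x ⬝ᵥ Matrix.of (fun _ _ => (1 : ℝ)) *ᵥ x = (∑ i, x i) ^ 2 := by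
    simp only [mulVec, dotProduct, Matrix.of_apply, one_mul, ← sum_mul, sq]
  have hI : x ⬝ᵥ x = ∑ i, x i ^ 2 := by simp only [dotProduct, sq]
  simp only [sub_mulVec, dotProduct_sub, smul_mulVec, dotProduct_smul, one_mulVec, smul_eq_mul,
    hI, hJ]

theorem exists_centered_dotProduct_deflated_mulVec (hsym : L.IsSymm)
    (hrow : ∀ i, ∑ j, L i j = 0) (hN : N ≠ 0) (α : ℝ) (x : Fin N → ℝ) :
    ∃ y : Fin N → ℝ, ∑ i, y i = 0 ∧ ∑ i, y i ^ 2 ≤ ∑ i, x i ^ 2 ∧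
      x ⬝ᵥ ((1 : Matrix (Fin N) (Fin N) ℝ) - α • L
        - (N : ℝ)⁻¹ • Matrix.of (fun _ _ => (1 : ℝ))) *ᵥ x
        = ∑ i, y i ^ 2 - α * (y ⬝ᵥ L *ᵥ y) := by
  have hN' : (N : ℝ) ≠ 0 := Nat.cast_ne_zero.2 hN
  set s := ∑ i, x i
  set y : Fin N → ℝ := x - fun _ => s / N
  have hy0 : ∑ i, y i = 0 := by
    simp only [y, Pi.sub_apply, sum_sub_distrib, sum_const, card_univ, Fintype.card_fin,
      nsmul_eq_mul]
    field_simp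
    ring
  have hy2 : ∑ i, y i ^ 2 = ∑ i, x i ^ 2 - (N : ℝ)⁻¹ * s ^ 2 := by
    simp only [y, Pi.sub_apply, sub_sq, sum_add_distrib, sum_sub_distrib, ← sum_mul, ← mul_sum,
      sum_const, card_univ, Fintype.card_fin, nsmul_eq_mul]
    field_simp
    ring
  refine ⟨y, hy0, ?_, ?_⟩
  · rw [hy2]
    have : 0 ≤ (N : ℝ)⁻¹ * s ^ 2 := by positivity
    linarith
  · rw [dotProduct_deflated_mulVec, sub_const_dotProduct_mulVec_sub_const hsym hrow, hy2]
    ring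

end Deflated

theorem abs_sub_mul_le_max {a b α T Q : ℝ} (hα : 0 ≤ α) (hab : a ≤ b) (hT0 : 0 ≤ T)
    (hT1 : T ≤ 1) (hQa : a * T ≤ Q) (hQb : Q ≤ b * T) :
    |T - α * Q| ≤ max (1 - α * a) (α * b - 1) := by
  have hmax : 0 ≤ max (1 - α * a) (α * b - 1) := by
    linarith [le_max_left (1 - α * a) (α * b - 1), le_max_right (1 - α * a) (α * b - 1),
      mul_nonneg hα (sub_nonneg.2 hab)]
  have hscale : ∀ c, T * c ≤ max c 0 := fun c => by
    rcases le_total 0 c with hc | hc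
    · exact (mul_le_of_le_one_left hc hT1).trans (le_max_left _ _)
    · exact (mul_nonpos_of_nonneg_of_nonpos hT0 hc).trans (le_max_right _ _)
  rw [abs_le]
  constructor
  · linarith [mul_le_mul_of_nonneg_left hQb hα, hscale (α * b - 1),
      max_le (le_max_right (1 - α * a) (α * b - 1)) hmax]
  · linarith [mul_le_mul_of_nonneg_left hQa hα, hscale (1 - α * a),
      max_le (le_max_left (1 - α * a) (α * b - 1)) hmax]

theorem specNorm_deflated_eq {N : ℕ} {L : Matrix (Fin N) (Fin N) ℝ} (hsym : L.IsSymm)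
    (hrow : ∀ i, ∑ j, L i j = 0) (hN : 1 < N) {α : ℝ} (hα : 0 < α) :
    specNorm ((1 : Matrix (Fin N) (Fin N) ℝ) - α • L
        - (N : ℝ)⁻¹ • Matrix.of (fun _ _ => (1 : ℝ)))
      = max (1 - α * lambda2 L) (α * lambdaN L - 1) := by
  set M := (1 : Matrix (Fin N) (Fin N) ℝ) - α • L - (N : ℝ)⁻¹ • Matrix.of (fun _ _ => (1 : ℝ))
  apply le_antisymm
  · refine specNorm_le hN fun x hx1 => ?_
    obtain ⟨y, hy0, hy1, hxy⟩ :=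
      exists_centered_dotProduct_deflated_mulVec hsym hrow (by omega) α x
    rw [hxy]
    exact abs_sub_mul_le_max hα.le (lambda2_le_lambdaN hN) (sum_nonneg fun i _ => sq_nonneg _)
      (hx1 ▸ hy1) (lambda2_mul_sum_sq_le L hy0) (dotProduct_mulVec_le_lambdaN_mul L y)
  · refine max_le ?_ ?_
    · have h2 : (1 - specNorm M) / α ≤ lambda2 L := le_lambda2 hN fun x hx1 hx0 => by
        have h := (le_abs_self _).trans (abs_le_specNorm (M := M) hx1)
        rw [dotProduct_deflated_mulVec, hx1, hx0] at h
        rw [div_le_iff₀ hα]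
        linarith
      rw [div_le_iff₀ hα] at h2
      linarith
    · have hN' : lambdaN L ≤ (specNorm M + 1) / α := lambdaN_le hN fun x hx1 => by
        have h := (neg_le_abs _).trans (abs_le_specNorm (M := M) hx1)
        rw [dotProduct_deflated_mulVec, hx1] at h
        have : 0 ≤ (N : ℝ)⁻¹ * (∑ i, x i) ^ 2 := by positivity
        rw [le_div_iff₀ hα]
        linarith
      rw [le_div_iff₀ hα] at hN'
      linarith

theorem max_one_sub_mul_eq_left {a b α : ℝ} (hab : 0 < a + b) (hα : α ≤ 2 / (a + b)) :
    max (1 - α * a) (α * b - 1) = 1 - α * a :=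
  max_eq_left (by rw [le_div_iff₀ hab] at hα; linarith)

theorem exists_reflected_weight {a b α : ℝ} (ha : 0 < a) (hab : a ≤ b)
    (hα : 2 / (a + b) < α) (hαb : α < 2 / b) :
    ∃ α' ∈ Set.Ioc 0 (2 / (a + b)), α' < α ∧
      max (1 - α' * a) (α' * b - 1) = max (1 - α * a) (α * b - 1) ∧
      max (1 - α * a) (α * b - 1) ∈ Set.Ioo 0 1 := by
  have hb : 0 < b := ha.trans_le hab
  have hab' : 0 < a + b := by linarith
  have hα0 : 0 < α := (div_pos two_pos hab').trans hα
  rw [div_lt_iff₀ hab'] at hα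
  rw [lt_div_iff₀ hb] at hαb
  have hmax : max (1 - α * a) (α * b - 1) = α * b - 1 := max_eq_right (by linarith)
  have hα's : (2 - α * b) / a ≤ 2 / (a + b) := by
    rw [div_le_div_iff₀ ha hab']
    nlinarith
  refine ⟨(2 - α * b) / a, ⟨div_pos (by linarith) ha, hα's⟩, ?_, ?_, ?_⟩
  · rw [div_lt_iff₀ ha]
    linarith
  · rw [max_one_sub_mul_eq_left hab' hα's, hmax]
    field_simp
    ring
  · rw [hmax]
    constructor <;> nlinarith

theorem averagingTime_g_nonneg {N : ℕ} {K φmax ε δ s : ℝ} (hK : 0 ≤ K) (hε : 0 ≤ ε)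
    (hε2 : ε ≤ 2) (hδ : 0 < δ) (hδ2 : δ ≤ 2) (hs : s ∈ Set.Ioo 0 1) :
    0 ≤ (4 * φmax ^ 2 * Real.log (2 / δ) / (K * ε)) * (Real.log (ε / 2) / Real.log s + 1) *
      (Real.log (ε / 2) / (N * Real.log s) + 1 / (N : ℝ)
        + ((1 - s ^ 2 * ε ^ 2 / 4) / (1 - s ^ 2)) * (1 - 1 / (N : ℝ))) := by
  obtain ⟨hs0, hs1⟩ := hs
  have hlogs : Real.log s < 0 := Real.log_neg hs0 hs1
  have hlogε : Real.log (ε / 2) ≤ 0 := Real.log_nonpos (by positivity) (by linarith)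
  have hlogδ : 0 ≤ Real.log (2 / δ) := Real.log_nonneg (by rw [le_div_iff₀ hδ]; linarith)
  have hN : 0 ≤ 1 - 1 / (N : ℝ) := by
    rcases N.eq_zero_or_pos with rfl | hN
    · simp
    · rw [sub_nonneg, div_le_one (by positivity)]
      exact_mod_cast hN
  have hsε : s * ε ≤ 2 := by nlinarith
  have hfrac : 0 ≤ (1 - s ^ 2 * ε ^ 2 / 4) / (1 - s ^ 2) :=
    div_nonneg (by nlinarith [mul_nonneg hs0.le hε]) (by nlinarith)
  have hh : 0 ≤ Real.log (ε / 2) / Real.log s + 1 := by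
    linarith [div_nonneg_of_nonpos hlogε hlogs.le]
  have hr : 0 ≤ Real.log (ε / 2) / (N * Real.log s) :=
    div_nonneg_of_nonpos hlogε (mul_nonpos_of_nonneg_of_nonpos N.cast_nonneg hlogs.le)
  exact mul_nonneg (mul_nonneg (div_nonneg (by positivity) (by positivity)) hh)
    (add_nonneg (add_nonneg hr (by positivity)) (mul_nonneg hfrac hN))

theorem ANC_weight_optimization_reduction_general
    {N : ℕ}
    (L : Matrix (Fin N) (Fin N) ℝ)
    (hLap : IsGraphLaplacian L) (hconn : 0 < lambda2 L)
    (K φmax ε δ : ℝ) (hK : 0 < K)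
    (hε : 0 < ε) (hε1 : ε < 1) (hδ : 0 < δ) (hδ1 : δ < 1)
    (γ2 : ℝ → ℝ)
    (hγ2 : ∀ α, γ2 α = specNorm ((1 : Matrix (Fin N) (Fin N) ℝ) - α • L
      - (N : ℝ)⁻¹ • Matrix.of (fun _ _ => (1 : ℝ))))
    (h g : ℝ → ℝ)
    (hh : ∀ s, h s = Real.log (ε / 2) / Real.log s + 1)
    (hg : ∀ s, g s = (4 * φmax ^ 2 * Real.log (2 / δ) / (K * ε)) * h s *
      (Real.log (ε / 2) / (N * Real.log s) + 1 / (N : ℝ)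
        + ((1 - s ^ 2 * ε ^ 2 / 4) / (1 - s ^ 2)) * (1 - 1 / (N : ℝ))))
    (That : ℝ → ℝ)
    (hThat : ∀ α, That α = α ^ 2 * g (γ2 α) + h (γ2 α)) :
    sInf (That '' Set.Ioo 0 (2 / lambdaN L))
        = sInf (That '' Set.Ioc 0 (2 / (lambda2 L + lambdaN L)))
    ∧ ∀ α ∈ Set.Ioc (0 : ℝ) (2 / (lambda2 L + lambdaN L)),
        γ2 α = 1 - α * lambda2 L := by
  have hN := one_lt_of_lambda2_ne_zero hconn.ne'
  have hle := lambda2_le_lambdaN (L := L) hN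
  have hsum : 0 < lambda2 L + lambdaN L := by linarith
  have hγ : ∀ {α}, 0 < α → γ2 α = max (1 - α * lambda2 L) (α * lambdaN L - 1) := fun hα =>
    (hγ2 _).trans (specNorm_deflated_eq hLap.1 hLap.2.2 hN hα)
  have hlow : ∀ α ∈ Set.Ioc (0 : ℝ) (2 / (lambda2 L + lambdaN L)), γ2 α = 1 - α * lambda2 L :=
    fun α hα => (hγ hα.1).trans (max_one_sub_mul_eq_left hsum hα.2)
  have hopt : 2 / (lambda2 L + lambdaN L) < 2 / lambdaN L :=
    div_lt_div_of_pos_left two_pos (hconn.trans_le hle) (by linarith)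
  refine ⟨csInf_eq_csInf_of_forall_exists_le ?_ ?_, hlow⟩
  · rintro _ ⟨α, ⟨hα0, hα⟩, rfl⟩
    rcases le_or_gt α (2 / (lambda2 L + lambdaN L)) with hαs | hαs
    · exact ⟨That α, ⟨α, ⟨hα0, hαs⟩, rfl⟩, le_rfl⟩
    obtain ⟨α', hα', hα'α, hγeq, hγ01⟩ := exists_reflected_weight hconn hle hαs hα
    refine ⟨That α', ⟨α', hα', rfl⟩, ?_⟩
    have hg0 : 0 ≤ g (γ2 α) := by
      rw [hg, hh, hγ hα0]
      exact averagingTime_g_nonneg hK.le hε.le (by linarith) hδ (by linarith) hγ01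
    rw [hThat, hThat, hγ hα'.1, hγeq, ← hγ hα0]
    gcongr
    exact hα'.1.le
  · rintro _ ⟨α, hα, rfl⟩
    exact ⟨That α, ⟨α, ⟨hα.1, hα.2.trans_lt hopt⟩, rfl⟩, le_rfl⟩

/-- Reduction of the link-weight optimization for the approximate averaging
time `T̂^α(ε,δ) = α²g(γ₂(α)) + h(γ₂(α))`: the infimum over
`0 < α < 2/λ_N(L)` equals the infimum over `0 < α ≤ 2/(λ₂(L)+λ_N(L))`, and on
the latter range `γ₂(α) = 1 − αλ₂(L)`; no `α > α• = 2/(λ₂(L)+λ_N(L))` improves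
the approximate averaging time. -/
theorem ANC_weight_optimization_reduction
    {N : ℕ} (hN : 0 < N)
    (L : Matrix (Fin N) (Fin N) ℝ)
    (hLap : IsGraphLaplacian L) (hconn : 0 < lambda2 L)
    (K φmax ε δ : ℝ) (hK : 0 < K) (hφmax : 0 < φmax)
    (hε : 0 < ε) (hε1 : ε < 1) (hδ : 0 < δ) (hδ1 : δ < 1)
    (γ2 : ℝ → ℝ)
    (hγ2 : ∀ α, γ2 α = specNorm ((1 : Matrix (Fin N) (Fin N) ℝ) - α • L
      - (N : ℝ)⁻¹ • Matrix.of (fun _ _ => (1 : ℝ))))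
    (h g : ℝ → ℝ)
    (hh : ∀ s, h s = Real.log (ε / 2) / Real.log s + 1)
    (hg : ∀ s, g s = (4 * φmax ^ 2 * Real.log (2 / δ) / (K * ε)) * h s *
      (Real.log (ε / 2) / (N * Real.log s) + 1 / (N : ℝ)
        + ((1 - s ^ 2 * ε ^ 2 / 4) / (1 - s ^ 2)) * (1 - 1 / (N : ℝ))))
    (That : ℝ → ℝ)
    (hThat : ∀ α, That α = α ^ 2 * g (γ2 α) + h (γ2 α)) :
    sInf (That '' Set.Ioo 0 (2 / lambdaN L))
        = sInf (That '' Set.Ioc 0 (2 / (lambda2 L + lambdaN L)))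
    ∧ ∀ α ∈ Set.Ioc (0 : ℝ) (2 / (lambda2 L + lambdaN L)),
        γ2 α = 1 - α * lambda2 L :=
  ANC_weight_optimization_reduction_general L hLap hconn K φmax ε δ hK hε hε1 hδ hδ1 γ2 hγ2 h g hh
    hg That hThat
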